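/- Let Λ ⊂ ℂ be a lattice, let ℓ = 2n+1 be odd (n ≥ 0), and let p₁, …, p_ℓ ∈ ℂ be pairwise distinct modulo Λ. Set ζ_{ij} = ζ(p_i − p_j) and ℘_i = Σ_{j≠i} ℘(p_i − p_j). Define the polynomials f₀(x) = Σ_{i=1}^ℓ x_i and, for 1 ≤ i ≤ ℓ, f_i(x) = x_i² − x₀ Σ_{j≠i} ζ_{ij} x_j − x₀ − (3/4)℘_i x₀², in the variables x = (x₀, x₁, …, x_ℓ) ∈ ℂ^{ℓ+1}. Then the origin is an isolated point of the common zero set: there exists ε > 0 such that the only x ∈ ℂ^{ℓ+1} with |x_i| < ε for all i = 0, …, ℓ and f₀(x) = f₁(x) = ⋯ = f_ℓ(x) = 0 is x = 0. -/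

import Mathlib

/-!
If `x₀ ≠ 0`, write `x₀ = r²` and `uᵢ = xᵢ / r`. The equations become `uᵢ² = 1 + dᵢ`, where `dᵢ`
is linear in `x` and `x₀`, so small near the origin; hence each `uᵢ` lies within `‖dᵢ‖` of a sign
`tᵢ = ±1`. As `ℓ` is odd, `∑ tᵢ` is an odd integer, so `|∑ tᵢ| ≥ 1`, yet it lies within
`∑ ‖dᵢ‖ < 1` of `∑ uᵢ = 0`. Thus `x₀ = 0`, and then `xᵢ² = 0`.
-/

noncomputable section

/-- The lattice point `m ω₁ + n ω₂` attached to an integer pair. -/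
def latPt (ω₁ ω₂ : ℂ) (p : ℤ × ℤ) : ℂ := p.1 * ω₁ + p.2 * ω₂

/-- Membership in the lattice `Λ = ℤω₁ + ℤω₂`. -/
def IsLatticePt (ω₁ ω₂ z : ℂ) : Prop := ∃ m n : ℤ, z = m * ω₁ + n * ω₂

/-- The Weierstrass `℘`-function of the lattice `ℤω₁ + ℤω₂`. -/
def wp (ω₁ ω₂ : ℂ) (z : ℂ) : ℂ :=
  1 / z ^ 2 + ∑' p : {p : ℤ × ℤ // p ≠ 0},
    (1 / (z - latPt ω₁ ω₂ p.1) ^ 2 - 1 / (latPt ω₁ ω₂ p.1) ^ 2)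

/-- The Weierstrass `ζ`-function of the lattice `ℤω₁ + ℤω₂`. -/
def wzeta (ω₁ ω₂ : ℂ) (z : ℂ) : ℂ :=
  1 / z + ∑' p : {p : ℤ × ℤ // p ≠ 0},
    (1 / (z - latPt ω₁ ω₂ p.1) + 1 / latPt ω₁ ω₂ p.1 + z / (latPt ω₁ ω₂ p.1) ^ 2)

/-- The derivative `℘'` of the Weierstrass `℘`-function. -/
def wpDeriv (ω₁ ω₂ : ℂ) : ℂ → ℂ := deriv (wp ω₁ ω₂)

theorem odd_sum_of_odd_card {ι : Type*} [Fintype ι] (hι : Odd (Fintype.card ι)) (t : ι → ℤ)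
    (ht : ∀ i, Odd (t i)) : Odd (∑ i, t i) := by
  rw [← ZMod.intCast_eq_one_iff_odd, Int.cast_sum]
  simp only [ZMod.intCast_eq_one_iff_odd.mpr (ht _), Finset.sum_const, Finset.card_univ,
    nsmul_eq_mul, mul_one, ZMod.natCast_eq_one_iff_odd.mpr hι]

theorem Complex.exists_odd_norm_sub_intCast_le (u : ℂ) :
    ∃ t : ℤ, Odd t ∧ ‖u - t‖ ≤ ‖u ^ 2 - 1‖ := by
  have hprod : ‖u - 1‖ * ‖u + 1‖ = ‖u ^ 2 - 1‖ := by rw [← norm_mul]; ring_nf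
  have htwo : 2 ≤ ‖u - 1‖ + ‖u + 1‖ := by
    calc (2 : ℝ) = ‖(1 - u) + (u + 1)‖ := by ring_nf; norm_num
      _ ≤ ‖u - 1‖ + ‖u + 1‖ := by rw [norm_sub_rev u 1]; exact norm_add_le _ _
  rcases le_total ‖u - 1‖ ‖u + 1‖ with h | h
  · refine ⟨1, odd_one, ?_⟩
    push_cast
    nlinarith [norm_nonneg (u - 1)]
  · refine ⟨-1, odd_neg_one, ?_⟩
    push_cast
    rw [sub_neg_eq_add]
    nlinarith [norm_nonneg (u + 1)]

theorem eq_zero_of_sq_eq_mul_one_add {ι : Type*} [Fintype ι] (hι : Odd (Fintype.card ι))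
    {x₀ : ℂ} {x d : ι → ℂ} (hd : ∑ i, ‖d i‖ < 1) (hsum : ∑ i, x i = 0)
    (hsq : ∀ i, x i ^ 2 = x₀ * (1 + d i)) : x₀ = 0 := by
  by_contra hx₀
  obtain ⟨r, hr⟩ := IsAlgClosed.exists_pow_nat_eq x₀ two_pos
  have hu : ∀ i, (x i / r) ^ 2 - 1 = d i := fun i => by
    rw [div_pow, hsq, hr, mul_div_cancel_left₀ _ hx₀]; ring
  choose t ht_odd ht using fun i => Complex.exists_odd_norm_sub_intCast_le (x i / r)
  have hodd := odd_sum_of_odd_card hι t ht_odd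
  have hone : 1 ≤ ‖((∑ i, t i : ℤ) : ℂ)‖ := by
    rw [Complex.norm_intCast]
    exact_mod_cast Int.one_le_abs (by rintro h; simp [h] at hodd)
  have hcast : ((∑ i, t i : ℤ) : ℂ) = ∑ i, ((t i : ℂ) - x i / r) := by
    rw [Finset.sum_sub_distrib, ← Finset.sum_div, hsum, zero_div, sub_zero, Int.cast_sum]
  have hsmall : ‖((∑ i, t i : ℤ) : ℂ)‖ < 1 :=
    calc ‖((∑ i, t i : ℤ) : ℂ)‖ ≤ ∑ i, ‖(t i : ℂ) - x i / r‖ := hcast ▸ norm_sum_le _ _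
      _ ≤ ∑ i, ‖d i‖ := Finset.sum_le_sum fun i _ => by rw [norm_sub_rev, ← hu]; exact ht i
      _ < 1 := hd
  exact hone.not_gt hsmall

theorem exists_isolated_zero_of_sq_eq_mul_one_add {ι : Type*} [Fintype ι]
    (hι : Odd (Fintype.card ι)) (d : ℂ × (ι → ℂ) → ι → ℂ) (hd : Continuous d) (hd0 : d 0 = 0) :
    ∃ ε : ℝ, 0 < ε ∧ ∀ (x₀ : ℂ) (x : ι → ℂ), ‖x₀‖ < ε → (∀ i, ‖x i‖ < ε) → ∑ i, x i = 0 →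
      (∀ i, x i ^ 2 = x₀ * (1 + d (x₀, x) i)) → x₀ = 0 ∧ x = 0 := by
  have hsmall : ∀ᶠ y in nhds (0 : ℂ × (ι → ℂ)), ∑ i, ‖d y i‖ < 1 := by
    have hcont : Continuous fun y => ∑ i, ‖d y i‖ := by fun_prop
    refine hcont.continuousAt.eventually_lt continuousAt_const ?_
    simp [hd0]
  obtain ⟨ε, hε, hball⟩ := Metric.eventually_nhds_iff_ball.mp hsmall
  refine ⟨ε, hε, fun x₀ x hx₀ hx hsum hsq => ?_⟩
  have hmem : (x₀, x) ∈ Metric.ball (0 : ℂ × (ι → ℂ)) ε := by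
    rw [mem_ball_zero_iff, Prod.norm_def, max_lt_iff, pi_norm_lt_iff hε]
    exact ⟨hx₀, hx⟩
  have hx₀0 := eq_zero_of_sq_eq_mul_one_add hι (hball _ hmem) hsum hsq
  refine ⟨hx₀0, funext fun i => ?_⟩
  simpa [hx₀0] using hsq i

theorem stmt1 (ω₁ ω₂ : ℂ)
    (n : ℕ) (p : Fin (2 * n + 1) → ℂ) :
    ∃ ε : ℝ, 0 < ε ∧
      ∀ (x₀ : ℂ) (x : Fin (2 * n + 1) → ℂ),
        ‖x₀‖ < ε → (∀ i, ‖x i‖ < ε) →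
        (∑ i, x i) = 0 →
        (∀ i, (x i) ^ 2 - x₀ * (∑ j ∈ Finset.univ.erase i, wzeta ω₁ ω₂ (p i - p j) * x j)
            - x₀ - (3 / 4) * (∑ j ∈ Finset.univ.erase i, wp ω₁ ω₂ (p i - p j)) * x₀ ^ 2 = 0) →
        x₀ = 0 ∧ x = 0 := by
  let d : ℂ × (Fin (2 * n + 1) → ℂ) → Fin (2 * n + 1) → ℂ := fun y i =>
    (∑ j ∈ Finset.univ.erase i, wzeta ω₁ ω₂ (p i - p j) * y.2 j)
      + (3 / 4) * (∑ j ∈ Finset.univ.erase i, wp ω₁ ω₂ (p i - p j)) * y.1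
  have hd : Continuous d := by fun_prop
  have hd0 : d 0 = 0 := by funext i; simp [d]
  obtain ⟨ε, hε, hiso⟩ := exists_isolated_zero_of_sq_eq_mul_one_add (by simp) d hd hd0
  refine ⟨ε, hε, fun x₀ x hx₀ hx hsum hf => hiso x₀ x hx₀ hx hsum fun i => ?_⟩
  linear_combination hf i
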